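/- arXiv:1706.03525 — 10 statements merged into one kernel-verified Lean document; each statement's English description precedes it below -/
import Mathlib

section
/- If L is a subadditive family of subsets of ℕ (i.e., for all L₁, L₂ ∈ L there exists L ∈ L with L₁ + L₂ ⊆ L) and Δ' is a nonempty subset of the set of distances Δ(L) such that gcd Δ' ≤ δ(L) := inf Δ(L), then gcd Δ' = δ(L). In particular δ(L) = gcd Δ(L). -/
open Pointwise Set ENNReal

/-- A family of subsets of ℕ is *subadditive* if for all `L₁, L₂` in the family
there is `L` in the family with `L₁ + L₂ ⊆ L` (sumset). -/
def Subadd (F : Set (Set ℕ)) : Prop :=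
  ∀ L₁ ∈ F, ∀ L₂ ∈ F, ∃ L ∈ F, L₁ + L₂ ⊆ L

/-- The set of distances of `L ⊆ ℕ`. -/
def DeltaSet (L : Set ℕ) : Set ℕ :=
  {d | 1 ≤ d ∧ ∃ l ∈ L, L ∩ Set.Icc l (l + d) = {l, l + d}}

/-- The set of distances of a family. -/
def DeltaFam (F : Set (Set ℕ)) : Set ℕ := ⋃ L ∈ F, DeltaSet L

/-- Unions of sets of the family containing `k`. -/
def UU (F : Set (Set ℕ)) (k : ℕ) : Set ℕ := ⋃ L ∈ {L ∈ F | k ∈ L}, L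

/-- gcd of a set of naturals: the greatest common divisor (with `gcd ∅ = 0`,
realized since the set of common divisors of `∅` is unbounded and `sSup` of an
unbounded set of naturals is `0`). -/
noncomputable def setGcd (S : Set ℕ) : ℕ := sSup {d | ∀ x ∈ S, d ∣ x}

noncomputable def supE (L : Set ℕ) : ℝ≥0∞ := sSup ((fun n : ℕ => (n : ℝ≥0∞)) '' L)

noncomputable def infE (L : Set ℕ) : ℝ≥0∞ := sInf ((fun n : ℕ => (n : ℝ≥0∞)) '' L)

/-- The elasticity `ρ(L) = sup L / inf L⁺` of a set, computed in `ℝ≥0∞`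
(conventions `sup ∅ = 0`, `inf ∅ = ∞`, `a/∞ = 0`, `a/0 = ∞` for `a > 0` hold in `ℝ≥0∞`). -/
noncomputable def elast (L : Set ℕ) : ℝ≥0∞ := supE L / infE (L \ {0})

/-- The elasticity `ρ(𝓛)` of a family. -/
noncomputable def famElast (F : Set (Set ℕ)) : ℝ≥0∞ := ⨆ L ∈ F, elast L

noncomputable def USupE (F : Set (Set ℕ)) (k : ℕ) : ℝ≥0∞ := supE (UU F k)

noncomputable def UInfE (F : Set (Set ℕ)) (k : ℕ) : ℝ≥0∞ := infE (UU F k)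

noncomputable def supN (L : Set ℕ) : ℕ∞ := sSup ((fun n : ℕ => (n : ℕ∞)) '' L)

noncomputable def infN (L : Set ℕ) : ℕ∞ := sInf ((fun n : ℕ => (n : ℕ∞)) '' L)

/-- `k`-fold sumset. -/
def nfold : ℕ → Set ℕ → Set ℕ
  | 0, _ => {0}
  | n + 1, L => nfold n L + L

lemma mem_deltaFam {F : Set (Set ℕ)} {d : ℕ} :
    d ∈ DeltaFam F ↔ ∃ L ∈ F, d ∈ DeltaSet L := by
  simp [DeltaFam]

lemma gap_aux (L : Set ℕ) :
    ∀ n a b : ℕ, b - a ≤ n → a ∈ L → b ∈ L → a < b →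
      ∃ d ∈ DeltaSet L, d ≤ b - a := by
  intro n
  induction n with
  | zero => intro a b h _ _ hab; omega
  | succ n ih =>
    intro a b h ha hb hab
    by_cases hc : ∃ c ∈ L, a < c ∧ c < b
    · obtain ⟨c, hcL, hac, hcb⟩ := hc
      obtain ⟨d, hd, hdle⟩ := ih c b (by omega) hcL hb hcb
      exact ⟨d, hd, by omega⟩
    · push_neg at hc
      refine ⟨b - a, ⟨by omega, a, ha, ?_⟩, le_refl _⟩
      have hba : a + (b - a) = b := by omega
      rw [hba]
      ext x
      simp only [Set.mem_inter_iff, Set.mem_Icc, Set.mem_insert_iff,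
        Set.mem_singleton_iff]
      constructor
      · rintro ⟨hxL, hax, hxb⟩
        rcases eq_or_lt_of_le hax with h1 | h1
        · exact Or.inl h1.symm
        rcases eq_or_lt_of_le hxb with h2 | h2
        · exact Or.inr h2
        exact absurd (hc x hxL h1) (by omega)
      · rintro (rfl | rfl)
        · exact ⟨ha, le_refl _, le_of_lt hab⟩
        · exact ⟨hb, le_of_lt hab, le_refl _⟩
theorem stmt_0 (F : Set (Set ℕ)) (hF : Subadd F) (D' : Set ℕ)
    (hsub : D' ⊆ DeltaFam F) (hne : D'.Nonempty)
    (hle : setGcd D' ≤ sInf (DeltaFam F)) :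
    setGcd D' = sInf (DeltaFam F) ∧ sInf (DeltaFam F) = setGcd (DeltaFam F) := by
  obtain ⟨d0, hd0⟩ := hne
  have hΔne : (DeltaFam F).Nonempty := ⟨d0, hsub hd0⟩
  set δ := sInf (DeltaFam F) with hδ
  have hδmem : δ ∈ DeltaFam F := Nat.sInf_mem hΔne
  have hone : ∀ d ∈ DeltaFam F, 1 ≤ d := by
    intro d hd
    obtain ⟨L, _, h1, _⟩ := mem_deltaFam.mp hd
    exact h1
  have hδpos : 1 ≤ δ := hone δ hδmem
  -- the witness for δ
  obtain ⟨L₀, hL₀F, _, ℓ, hℓ, heq0⟩ := mem_deltaFam.mp hδmem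
  have hℓδ : ℓ + δ ∈ L₀ := by
    have : ℓ + δ ∈ L₀ ∩ Set.Icc ℓ (ℓ + δ) := by
      rw [heq0]; exact Or.inr rfl
    exact this.1
  -- chains of multiples of δ
  have chain : ∀ q : ℕ, ∃ L ∈ F, ∃ y : ℕ, ∀ i ≤ q, y + i * δ ∈ L := by
    intro q
    induction q with
    | zero => exact ⟨L₀, hL₀F, ℓ, fun i hi => by interval_cases i; simpa using hℓ⟩
    | succ q ih =>
      obtain ⟨L, hLF, y, hy⟩ := ih
      obtain ⟨L', hL'F, hsum⟩ := hF L hLF L₀ hL₀F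
      refine ⟨L', hL'F, y + ℓ, fun i hi => ?_⟩
      rcases Nat.lt_or_ge i (q + 1) with h | h
      · have : (y + i * δ) + ℓ ∈ L + L₀ := Set.add_mem_add (hy i (by omega)) hℓ
        have h2 := hsum this
        have heq : (y + i * δ) + ℓ = y + ℓ + i * δ := by ring
        rwa [heq] at h2
      · have hiq : i = q + 1 := by omega
        subst hiq
        have : (y + q * δ) + (ℓ + δ) ∈ L + L₀ :=
          Set.add_mem_add (hy q (le_refl _)) hℓδ
        have h2 := hsum this
        have heq : (y + q * δ) + (ℓ + δ) = y + ℓ + (q + 1) * δ := by ring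
        rwa [heq] at h2
  -- δ divides every distance
  have hdvd : ∀ d ∈ DeltaFam F, δ ∣ d := by
    intro d hd
    obtain ⟨L₁, hL₁F, _, ℓ₁, hℓ₁, heq1⟩ := mem_deltaFam.mp hd
    have hd1 : 1 ≤ d := hone d hd
    have hℓ₁d : ℓ₁ + d ∈ L₁ := by
      have : ℓ₁ + d ∈ L₁ ∩ Set.Icc ℓ₁ (ℓ₁ + d) := by
        rw [heq1]; exact Or.inr rfl
      exact this.1
    by_contra hnd
    have hr : d % δ ≠ 0 := fun h => hnd (Nat.dvd_of_mod_eq_zero h)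
    have hrlt : d % δ < δ := Nat.mod_lt _ (by omega)
    have hqr : (d / δ) * δ + d % δ = d := by rw [Nat.mul_comm]; exact Nat.div_add_mod d δ
    obtain ⟨L, hLF, y, hy⟩ := chain (d / δ)
    obtain ⟨L', hL'F, hsum⟩ := hF L hLF L₁ hL₁F
    have ha : y + (d / δ) * δ + ℓ₁ ∈ L' :=
      hsum (Set.add_mem_add (hy _ (le_refl _)) hℓ₁)
    have hb : y + 0 * δ + (ℓ₁ + d) ∈ L' :=
      hsum (Set.add_mem_add (hy 0 (Nat.zero_le _)) hℓ₁d)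
    have hb' : y + ℓ₁ + d ∈ L' := by
      have : y + 0 * δ + (ℓ₁ + d) = y + ℓ₁ + d := by ring
      rwa [this] at hb
    have hab : y + (d / δ) * δ + ℓ₁ < y + ℓ₁ + d := by
      have : (d / δ) * δ < d := by omega
      omega
    obtain ⟨d', hd', hd'le⟩ := gap_aux L' (y + ℓ₁ + d - (y + (d / δ) * δ + ℓ₁))
      _ _ (le_refl _) ha hb' hab
    have hd'F : d' ∈ DeltaFam F := mem_deltaFam.mpr ⟨L', hL'F, hd'⟩
    have : δ ≤ d' := Nat.sInf_le hd'F
    omega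
  -- conclude
  have hubΔ : ∀ e ∈ {e | ∀ x ∈ DeltaFam F, e ∣ x}, e ≤ δ := fun e he =>
    Nat.le_of_dvd (by omega) (he δ hδmem)
  have hδdvdΔ : δ ∈ {e | ∀ x ∈ DeltaFam F, e ∣ x} := hdvd
  have hgcdΔ : setGcd (DeltaFam F) = δ := by
    refine le_antisymm (csSup_le ⟨δ, hδdvdΔ⟩ hubΔ) (le_csSup ⟨δ, hubΔ⟩ hδdvdΔ)
  have hδD' : δ ∈ {e | ∀ x ∈ D', e ∣ x} := fun x hx => hdvd x (hsub hx)
  have hd0pos : 1 ≤ d0 := hone d0 (hsub hd0)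
  have hbddD' : BddAbove {e | ∀ x ∈ D', e ∣ x} :=
    ⟨d0, fun e he => Nat.le_of_dvd (by omega) (he d0 hd0)⟩
  have hgeD' : δ ≤ setGcd D' := le_csSup hbddD' hδD'
  exact ⟨le_antisymm hle hgeD', hgcdΔ.symm⟩
end

section
/- Let 𝓛 ⊆ 𝒫(ℕ) be a subadditive family with Δ(𝓛) ≠ ∅ and δ := inf Δ(𝓛). If L ∈ 𝓛 and x, y ∈ L, then δ divides y − x. -/
open Pointwise Set ENNReal

lemma next_elem {M : Set ℕ} {a b : ℕ} (ha : a ∈ M) (hb : b ∈ M) (hab : a < b) :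
    ∃ c ∈ M, a < c ∧ c ≤ b ∧ (c - a) ∈ DeltaSet M := by
  have hS : {z | z ∈ M ∧ a < z}.Nonempty := ⟨b, hb, hab⟩
  set c := sInf {z | z ∈ M ∧ a < z} with hcdef
  have hc : c ∈ M ∧ a < c := Nat.sInf_mem hS
  refine ⟨c, hc.1, hc.2, Nat.sInf_le ⟨hb, hab⟩, ?_⟩
  refine ⟨by omega, a, ha, ?_⟩
  have hac : a + (c - a) = c := by omega
  rw [hac]
  ext z
  simp only [Set.mem_inter_iff, Set.mem_Icc, Set.mem_insert_iff, Set.mem_singleton_iff]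
  constructor
  · rintro ⟨hz, hza, hzc⟩
    rcases eq_or_lt_of_le hza with h | h
    · left; omega
    · right
      have := Nat.sInf_le (show z ∈ {z | z ∈ M ∧ a < z} from ⟨hz, h⟩)
      omega
  · rintro (rfl | rfl)
    · exact ⟨ha, le_refl _, by omega⟩
    · exact ⟨hc.1, by omega, le_refl _⟩

lemma delta_dvd (F : Set (Set ℕ)) (hF : Subadd F) (hne : (DeltaFam F).Nonempty)
    {d : ℕ} (hd : d ∈ DeltaFam F) : sInf (DeltaFam F) ∣ d := by
  set δ := sInf (DeltaFam F) with hδdef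
  -- witness for δ
  have hδmem : δ ∈ DeltaFam F := Nat.sInf_mem hne
  simp only [DeltaFam, Set.mem_iUnion] at hδmem hd
  obtain ⟨Ls, hLs, hδ1, ℓ, hℓ, hℓset⟩ := hδmem
  obtain ⟨L, hLF, hd1, k, hk, hkset⟩ := hd
  have hℓδ : ℓ + δ ∈ Ls := by
    have : ℓ + δ ∈ Ls ∩ Set.Icc ℓ (ℓ + δ) := by
      rw [hℓset]; right; rfl
    exact this.1
  have hkd : k + d ∈ L := by
    have : k + d ∈ L ∩ Set.Icc k (k + d) := by
      rw [hkset]; right; rfl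
    exact this.1
  by_contra hndvd
  set q := d / δ with hq
  set r := d % δ with hr
  have hqr : q * δ + r = d := by rw [hq, hr, Nat.mul_comm]; exact Nat.div_add_mod d δ
  have hr1 : 1 ≤ r := by
    rcases Nat.eq_zero_or_pos r with h | h
    · exact absurd (Nat.dvd_of_mod_eq_zero (hr ▸ h)) hndvd
    · exact h
  have hrδ : r < δ := Nat.mod_lt _ (by omega)
  -- key claim
  have claim : ∀ n : ℕ, ∃ M ∈ F, ∀ j ≤ n,
      k + n * ℓ + j * δ ∈ M ∧ k + d + n * ℓ + j * δ ∈ M := by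
    intro n
    induction n with
    | zero =>
      refine ⟨L, hLF, ?_⟩
      intro j hj
      interval_cases j
      simpa using ⟨hk, hkd⟩
    | succ n ih =>
      obtain ⟨M, hM, hMj⟩ := ih
      obtain ⟨M', hM', hsub⟩ := hF M hM Ls hLs
      refine ⟨M', hM', ?_⟩
      intro j hj
      rcases Nat.lt_or_ge j (n + 1) with hjn | hjn
      · have h1 := (hMj j (by omega)).1
        have h2 := (hMj j (by omega)).2
        constructor
        · have : (k + n * ℓ + j * δ) + ℓ ∈ M + Ls := Set.add_mem_add h1 hℓ
          have e : k + (n + 1) * ℓ + j * δ = (k + n * ℓ + j * δ) + ℓ := by ring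
          rw [e]; exact hsub this
        · have : (k + d + n * ℓ + j * δ) + ℓ ∈ M + Ls := Set.add_mem_add h2 hℓ
          have e : k + d + (n + 1) * ℓ + j * δ = (k + d + n * ℓ + j * δ) + ℓ := by ring
          rw [e]; exact hsub this
      · have hjeq : j = n + 1 := by omega
        subst hjeq
        have h1 := (hMj n le_rfl).1
        have h2 := (hMj n le_rfl).2
        constructor
        · have : (k + n * ℓ + n * δ) + (ℓ + δ) ∈ M + Ls := Set.add_mem_add h1 hℓδ
          have e : k + (n + 1) * ℓ + (n + 1) * δ = (k + n * ℓ + n * δ) + (ℓ + δ) := by ring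
          rw [e]; exact hsub this
        · have : (k + d + n * ℓ + n * δ) + (ℓ + δ) ∈ M + Ls := Set.add_mem_add h2 hℓδ
          have e : k + d + (n + 1) * ℓ + (n + 1) * δ = (k + d + n * ℓ + n * δ) + (ℓ + δ) := by ring
          rw [e]; exact hsub this
  obtain ⟨M, hMF, hMj⟩ := claim q
  have ha : k + q * ℓ + q * δ ∈ M := (hMj q le_rfl).1
  have hb : k + d + q * ℓ + 0 * δ ∈ M := (hMj 0 (Nat.zero_le _)).2
  simp only [Nat.zero_mul, Nat.add_zero] at hb
  have hab : k + q * ℓ + q * δ < k + d + q * ℓ := by omega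
  obtain ⟨c, hcM, hac, hcb, hcΔ⟩ := next_elem ha hb hab
  have hcfam : c - (k + q * ℓ + q * δ) ∈ DeltaFam F := by
    simp only [DeltaFam, Set.mem_iUnion]
    exact ⟨M, hMF, hcΔ⟩
  have := Nat.sInf_le hcfam
  omega

lemma delta_dvd_sub (F : Set (Set ℕ)) (hF : Subadd F) (hne : (DeltaFam F).Nonempty)
    (L : Set ℕ) (hL : L ∈ F) : ∀ n x y : ℕ, x ∈ L → y ∈ L → x ≤ y → y - x = n →
    sInf (DeltaFam F) ∣ (y - x) := by
  intro n
  induction n using Nat.strong_induction_on with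
  | _ n ih =>
    intro x y hx hy hxy hn
    rcases Nat.eq_or_lt_of_le hxy with h | h
    · subst h; simp
    · obtain ⟨c, hcL, hxc, hcy, hcΔ⟩ := next_elem hx hy h
      have h1 : sInf (DeltaFam F) ∣ (c - x) :=
        delta_dvd F hF hne (by simp only [DeltaFam, Set.mem_iUnion]; exact ⟨L, hL, hcΔ⟩)
      have h2 : sInf (DeltaFam F) ∣ (y - c) := by
        rcases Nat.eq_or_lt_of_le hcy with h' | h'
        · subst h'; simp
        · exact ih (y - c) (by omega) c y hcL hy hcy rfl
      have : y - x = (c - x) + (y - c) := by omega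
      rw [this]
      exact Nat.dvd_add h1 h2

theorem stmt_1 (F : Set (Set ℕ)) (hF : Subadd F) (hne : (DeltaFam F).Nonempty)
    (L : Set ℕ) (hL : L ∈ F) (x y : ℕ) (hx : x ∈ L) (hy : y ∈ L) :
    (((sInf (DeltaFam F) : ℕ) : ℤ)) ∣ (y : ℤ) - (x : ℤ) := by
  rcases le_total x y with h | h
  · have := delta_dvd_sub F hF hne L hL (y - x) x y hx hy h rfl
    have hcast : (y : ℤ) - (x : ℤ) = ((y - x : ℕ) : ℤ) := by omega
    rw [hcast]
    exact_mod_cast this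
  · have := delta_dvd_sub F hF hne L hL (x - y) y x hy hx h rfl
    have hcast : (y : ℤ) - (x : ℤ) = -((x - y : ℕ) : ℤ) := by omega
    rw [hcast]
    exact Dvd.dvd.neg_right (by exact_mod_cast this)
end

section
/- Let 𝓛 ⊆ 𝒫(ℕ) be a subadditive family with Δ(𝓛) ≠ ∅ and δ := inf Δ(𝓛). Then for every q ∈ ℕ there exist ℓ ∈ ℕ⁺ and L ∈ 𝓛 such that {ℓ, ℓ+δ, ℓ+2δ, …, ℓ+qδ} ⊆ L. -/
open Pointwise Set ENNReal

theorem stmt_2 (F : Set (Set ℕ)) (hF : Subadd F) (hne : (DeltaFam F).Nonempty) (q : ℕ) :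
    ∃ l : ℕ, 0 < l ∧ ∃ L ∈ F, ∀ i ≤ q, l + i * sInf (DeltaFam F) ∈ L := by
  set δ := sInf (DeltaFam F) with hδ
  have hmem : δ ∈ DeltaFam F := Nat.sInf_mem hne
  rw [DeltaFam, Set.mem_iUnion₂] at hmem
  obtain ⟨L, hLF, hδ1, l, hlL, hIcc⟩ := hmem
  have hl1 : l + δ ∈ L := by
    have : l + δ ∈ L ∩ Set.Icc l (l + δ) := by
      rw [hIcc]; right; rfl
    exact this.1
  -- key induction
  have key : ∀ n : ℕ, ∃ L' ∈ F, ∀ i ≤ n, (n + 1) * l + i * δ ∈ L' := by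
    intro n
    induction n with
    | zero => exact ⟨L, hLF, by intro i hi; interval_cases i; simpa using hlL⟩
    | succ n ih =>
      obtain ⟨L', hL'F, hprop⟩ := ih
      obtain ⟨L'', hL''F, hsub⟩ := hF L' hL'F L hLF
      refine ⟨L'', hL''F, ?_⟩
      intro i hi
      rcases Nat.lt_or_ge i (n + 1) with hi' | hi'
      · have : ((n + 1) * l + i * δ) + l ∈ L' + L :=
          Set.add_mem_add (hprop i (Nat.lt_succ_iff.mp hi')) hlL
        have h2 : (n + 1 + 1) * l + i * δ = ((n + 1) * l + i * δ) + l := by ring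
        rw [h2]; exact hsub this
      · have hieq : i = n + 1 := le_antisymm hi hi'
        subst hieq
        have : ((n + 1) * l + n * δ) + (l + δ) ∈ L' + L :=
          Set.add_mem_add (hprop n le_rfl) hl1
        have h2 : (n + 1 + 1) * l + (n + 1) * δ = ((n + 1) * l + n * δ) + (l + δ) := by
          ring
        rw [h2]; exact hsub this
  obtain ⟨L', hL'F, hprop⟩ := key (q + 1)
  refine ⟨(q + 2) * l + δ, by omega, L', hL'F, ?_⟩
  intro i hi
  have : (q + 1 + 1) * l + (i + 1) * δ ∈ L' := hprop (i + 1) (by omega)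
  have h2 : (q + 2) * l + δ + i * δ = (q + 1 + 1) * l + (i + 1) * δ := by ring
  rw [h2]; exact this
end

section
/- Let 𝓛 ⊆ 𝒫(ℕ) be a subadditive family and ℘ := gcd(⋃_{L∈𝓛} L⁺). If ℘ ≠ 0, then there exists k₀ ∈ ℕ such that for all k ≥ k₀, the union 𝒰_{℘k} := ⋃ {L ∈ 𝓛 : ℘k ∈ L} is nonempty. -/
open Pointwise Set ENNReal

theorem stmt_8 (F : Set (Set ℕ)) (hF : Subadd F)
    (hp : setGcd (⋃ L ∈ F, L \ {0}) ≠ 0) :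
    ∃ k₀ : ℕ, ∀ k ≥ k₀, (UU F (setGcd (⋃ L ∈ F, L \ {0}) * k)).Nonempty := by
  set S : Set ℕ := ⋃ L ∈ F, L \ {0} with hS
  set d := setGcd S with hd
  have hb : BddAbove {e | ∀ x ∈ S, e ∣ x} := by
    by_contra h
    exact hp (dif_neg (by simpa [BddAbove, upperBounds, Set.Nonempty] using h))
  have h1 : (1 : ℕ) ∈ {e | ∀ x ∈ S, e ∣ x} := fun x _ => one_dvd x
  have hdvd : ∀ x ∈ S, d ∣ x := Nat.sSup_mem ⟨1, h1⟩ hb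
  have hmax : ∀ e : ℕ, (∀ x ∈ S, e ∣ x) → e ≤ d := fun e he => le_csSup hb he
  -- S is nonempty and its elements are positive
  have hSne : S.Nonempty := by
    by_contra h
    rw [Set.not_nonempty_iff_eq_empty] at h
    rw [h] at hb
    simp only [Set.mem_empty_iff_false, false_implies, implies_true, Set.setOf_true] at hb
    exact not_bddAbove_univ hb
  have hSpos : ∀ x ∈ S, x ≠ 0 := by
    intro x hx
    simp only [hS, Set.mem_iUnion, Set.mem_diff, Set.mem_singleton_iff] at hx
    obtain ⟨L, _, _, hx0⟩ := hx
    exact hx0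
  -- the additive monoid generated by S
  set M := AddSubmonoid.closure S with hM
  have hMF : ∀ x ∈ M, x ≠ 0 → ∃ L ∈ F, x ∈ L := by
    intro x hx
    induction hx using AddSubmonoid.closure_induction with
    | mem y hy =>
      intro _
      simp only [hS, Set.mem_iUnion, Set.mem_diff] at hy
      obtain ⟨L, hL, hyL, _⟩ := hy
      exact ⟨L, hL, hyL⟩
    | zero => intro h; exact absurd rfl h
    | add a b _ _ iha ihb =>
      intro _
      rcases Nat.eq_zero_or_pos a with ha0 | ha0
      · rcases Nat.eq_zero_or_pos b with hb0 | hb0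
        · omega
        · simpa [ha0] using ihb hb0.ne'
      rcases Nat.eq_zero_or_pos b with hb0 | hb0
      · simpa [hb0] using iha ha0.ne'
      obtain ⟨L₁, hL₁, haL⟩ := iha ha0.ne'
      obtain ⟨L₂, hL₂, hbL⟩ := ihb hb0.ne'
      obtain ⟨L, hL, hsub⟩ := hF L₁ hL₁ L₂ hL₂
      exact ⟨L, hL, hsub (Set.add_mem_add haL hbL)⟩
  have hMdvd : ∀ x ∈ M, d ∣ x := by
    intro x hx
    induction hx using AddSubmonoid.closure_induction with
    | mem y hy => exact hdvd y hy
    | zero => exact dvd_zero d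
    | add a b _ _ iha ihb => exact dvd_add iha ihb
  -- the subgroup of ℤ generated by S
  set G := AddSubgroup.closure ((fun n : ℕ => (n : ℤ)) '' S) with hG
  obtain ⟨g, hg⟩ := Int.subgroup_cyclic G
  have hgG : g ∈ G := hg ▸ AddSubgroup.subset_closure rfl
  have hgdvdZ : ∀ x ∈ S, g ∣ (x : ℤ) := by
    intro x hx
    have : (x : ℤ) ∈ G := AddSubgroup.subset_closure ⟨x, hx, rfl⟩
    rw [hg, AddSubgroup.mem_closure_singleton] at this
    obtain ⟨n, hn⟩ := this
    exact ⟨n, by rw [← hn, smul_eq_mul]; ring⟩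
  have hgdvd : ∀ x ∈ S, g.natAbs ∣ x := by
    intro x hx
    have := Int.natAbs_dvd_natAbs.mpr (hgdvdZ x hx)
    simpa using this
  have hdg : (d : ℤ) ∣ g := by
    refine AddSubgroup.closure_induction ?_ ?_ ?_ ?_ hgG
    · rintro x ⟨y, hy, rfl⟩; exact Int.natCast_dvd_natCast.mpr (hdvd y hy)
    · exact dvd_zero _
    · intro a b _ _ ha hb; exact dvd_add ha hb
    · intro a _ ha; exact dvd_neg.mpr ha
  have hgne : g.natAbs ≠ 0 := by
    obtain ⟨s, hs⟩ := hSne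
    intro h0
    have := hgdvd s hs
    rw [h0] at this
    exact hSpos s hs (Nat.eq_zero_of_zero_dvd this)
  have hdeq : d = g.natAbs := by
    have h1 : g.natAbs ≤ d := hmax _ hgdvd
    have h2 : d ∣ g.natAbs := Int.natCast_dvd_natCast.mp (Int.dvd_natAbs.mpr hdg)
    exact le_antisymm (Nat.le_of_dvd (Nat.pos_of_ne_zero hgne) h2) h1
  -- g is a difference of elements of M
  have hdiff : ∃ u ∈ M, ∃ v ∈ M, g = (u : ℤ) - v := by
    refine AddSubgroup.closure_induction ?_ ?_ ?_ ?_ hgG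
    · rintro x ⟨y, hy, rfl⟩
      exact ⟨y, AddSubmonoid.subset_closure hy, 0, AddSubmonoid.zero_mem _, by simp⟩
    · exact ⟨0, AddSubmonoid.zero_mem _, 0, AddSubmonoid.zero_mem _, by simp⟩
    · rintro a b _ _ ⟨u, hu, v, hv, rfl⟩ ⟨u', hu', v', hv', rfl⟩
      exact ⟨u + u', AddSubmonoid.add_mem _ hu hu', v + v',
        AddSubmonoid.add_mem _ hv hv', by push_cast; ring⟩
    · rintro a _ ⟨u, hu, v, hv, rfl⟩
      exact ⟨v, hv, u, hu, by ring⟩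
  obtain ⟨u₀, hu₀, v₀, hv₀, huv₀⟩ := hdiff
  -- get u, v ∈ M with u = v + d
  have key : ∃ u ∈ M, ∃ v ∈ M, u = v + d := by
    rcases Int.natAbs_eq g with hcase | hcase
    · refine ⟨u₀, hu₀, v₀, hv₀, ?_⟩
      have h := huv₀
      rw [hcase] at h
      rw [hdeq]
      omega
    · refine ⟨v₀, hv₀, u₀, hu₀, ?_⟩
      have h := huv₀
      rw [hcase] at h
      rw [hdeq]
      omega
  obtain ⟨u, hu, v, hv, huv⟩ := key
  obtain ⟨m, hm⟩ := hMdvd v hv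
  have hdpos : 0 < d := Nat.pos_of_ne_zero hp
  -- key membership claim
  have hmem : ∀ k, m * m + m + 1 ≤ k → d * k ∈ M := by
    intro k hk
    rcases Nat.eq_zero_or_pos m with hm0 | hmpos
    · -- v = 0, u = d
      have hv0 : v = 0 := by rw [hm, hm0, mul_zero]
      have hud : u = d := by omega
      have : k • u ∈ M := AddSubmonoid.nsmul_mem _ hu k
      simpa [hud, smul_eq_mul, mul_comm] using this
    · set q := k / m with hq
      set r := k % m with hr
      have hqr : m * q + r = k := Nat.div_add_mod k m
      have hrm : r < m := Nat.mod_lt _ hmpos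
      have hqm : m + 1 ≤ q := by
        rw [hq, Nat.le_div_iff_mul_le hmpos]
        have : (m + 1) * m = m * m + m := by ring
        omega
      have hrq : r ≤ q := by omega
      have heq : d * k = (q - r) * v + r * u := by
        have : (q - r) * v + r * u = q * v + r * d := by
          rw [huv]
          have : (q - r) * v + r * (v + d) = ((q - r) + r) * v + r * d := by ring
          rw [this, Nat.sub_add_cancel hrq]
        rw [this, hm, ← hqr]
        ring
      rw [heq]
      have h1 : (q - r) • v ∈ M := AddSubmonoid.nsmul_mem _ hv _
      have h2 : r • u ∈ M := AddSubmonoid.nsmul_mem _ hu _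
      simpa [smul_eq_mul] using AddSubmonoid.add_mem _ h1 h2
  refine ⟨m * m + m + 1, fun k hk => ?_⟩
  have hdk : d * k ∈ M := hmem k hk
  have hdkne : d * k ≠ 0 := Nat.mul_ne_zero hp (by omega)
  obtain ⟨L, hL, hLm⟩ := hMF _ hdk hdkne
  exact ⟨d * k, Set.mem_biUnion ⟨hL, hLm⟩ hLm⟩
end

section
/- Let 𝓛 ⊆ 𝒫(ℕ) be a subadditive family. Then ℘ := gcd(⋃_{L∈𝓛} L⁺) divides gcd Δ(𝓛). -/
open Pointwise Set ENNReal

lemma setGcd_zero_of_all_zero {S : Set ℕ} (h : ∀ x ∈ S, x = 0) : setGcd S = 0 := by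
  have hD : {d : ℕ | ∀ x ∈ S, d ∣ x} = univ := by
    ext d; simp only [mem_setOf_eq, mem_univ, iff_true]
    intro x hx; rw [h x hx]; exact dvd_zero d
  have : ¬ BddAbove ({d : ℕ | ∀ x ∈ S, d ∣ x}) := by
    rw [hD]; exact not_bddAbove_univ
  rw [setGcd, csSup_of_not_bddAbove this]
  simp

lemma setGcd_dvd {S : Set ℕ} : ∀ x ∈ S, setGcd S ∣ x := by
  intro x hx
  by_cases hall : ∀ y ∈ S, y = 0
  · rw [hall x hx]; exact dvd_zero _
  · push_neg at hall
    obtain ⟨y, hy, hy0⟩ := hall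
    have hbdd : BddAbove {d : ℕ | ∀ z ∈ S, d ∣ z} :=
      ⟨y, fun d hd => Nat.le_of_dvd (Nat.pos_of_ne_zero hy0) (hd y hy)⟩
    have hne : {d : ℕ | ∀ z ∈ S, d ∣ z}.Nonempty := ⟨1, fun z _ => one_dvd z⟩
    have := Nat.sSup_mem hne hbdd
    exact this x hx

lemma dvd_setGcd {S : Set ℕ} {d : ℕ} (h : ∀ x ∈ S, d ∣ x) : d ∣ setGcd S := by
  by_cases hall : ∀ y ∈ S, y = 0
  · rw [setGcd_zero_of_all_zero hall]; exact dvd_zero d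
  · push_neg at hall
    obtain ⟨y, hy, hy0⟩ := hall
    set D := {d : ℕ | ∀ z ∈ S, d ∣ z} with hDdef
    have hbdd : BddAbove D :=
      ⟨y, fun e he => Nat.le_of_dvd (Nat.pos_of_ne_zero hy0) (he y hy)⟩
    have hne : D.Nonempty := ⟨1, fun z _ => one_dvd z⟩
    have hmem : sSup D ∈ D := Nat.sSup_mem hne hbdd
    have hlcm : Nat.lcm d (sSup D) ∈ D := fun z hz =>
      Nat.lcm_dvd (h z hz) (hmem z hz)
    have hle : Nat.lcm d (sSup D) ≤ sSup D := le_csSup hbdd hlcm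
    have hd0 : d ≠ 0 := by
      intro h0
      exact hy0 (Nat.eq_zero_of_zero_dvd (h0 ▸ h y hy))
    have hg0 : sSup D ≠ 0 := by
      intro h0
      exact hy0 (Nat.eq_zero_of_zero_dvd (h0 ▸ hmem y hy))
    have hlcm0 : Nat.lcm d (sSup D) ≠ 0 := Nat.lcm_ne_zero hd0 hg0
    have hge : sSup D ≤ Nat.lcm d (sSup D) :=
      Nat.le_of_dvd (Nat.pos_of_ne_zero hlcm0) (Nat.dvd_lcm_right _ _)
    have : Nat.lcm d (sSup D) = sSup D := le_antisymm hle hge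
    have h2 : d ∣ sSup D := this ▸ Nat.dvd_lcm_left d (sSup D)
    exact h2

theorem stmt_9 (F : Set (Set ℕ)) (hF : Subadd F) :
    setGcd (⋃ L ∈ F, L \ {0}) ∣ setGcd (DeltaFam F) := by
  apply dvd_setGcd
  intro d hd
  simp only [DeltaFam, mem_iUnion] at hd
  obtain ⟨L, hL, hd1, l, hl, hIcc⟩ := hd
  have hld : l + d ∈ L := by
    have : l + d ∈ L ∩ Set.Icc l (l + d) := by
      rw [hIcc]; right; rfl
    exact this.1
  have hmem : ∀ x : ℕ, x ∈ L → x ≠ 0 → setGcd (⋃ L ∈ F, L \ {0}) ∣ x := by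
    intro x hx hx0
    apply setGcd_dvd
    simp only [mem_iUnion]
    exact ⟨L, hL, hx, hx0⟩
  rcases Nat.eq_zero_or_pos l with rfl | hl0
  · have := hmem (0 + d) hld (by omega)
    simpa using this
  · have h1 := hmem l hl (by omega)
    have h2 := hmem (l + d) hld (by omega)
    have : d = (l + d) - l := by omega
    rw [this]
    exact Nat.dvd_sub h2 h1
end

section
/- Let 𝓛 ⊆ 𝒫(ℕ) be a subadditive family with finite elasticity ρ := ρ(𝓛), let 𝒰_k := ⋃ {L ∈ 𝓛 : k ∈ L}, ρ_k := sup 𝒰_k, λ_k := inf 𝒰_k, and λ := 1/ρ. Then for all k ∈ ℕ⁺: ρ_k ≤ kρ and kλ ≤ λ_k. -/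
open Pointwise Set ENNReal

lemma elast_le_fam {F : Set (Set ℕ)} {L : Set ℕ} (hL : L ∈ F) : elast L ≤ famElast F :=
  le_biSup _ hL

lemma supE_ge {L : Set ℕ} {x : ℕ} (hx : x ∈ L) : (x : ℝ≥0∞) ≤ supE L :=
  le_sSup ⟨x, hx, rfl⟩

lemma infE_le {L : Set ℕ} {x : ℕ} (hx : x ∈ L) : infE L ≤ (x : ℝ≥0∞) :=
  sInf_le ⟨x, hx, rfl⟩

lemma chain_top {F : Set (Set ℕ)} (hF : Subadd F) {L : Set ℕ} {k : ℕ}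
    (hL : L ∈ F) (h0 : (0 : ℕ) ∈ L) (hkL : k ∈ L) (hk : 0 < k) : famElast F = ⊤ := by
  have claim : ∀ n : ℕ, ∃ M ∈ F, k ∈ M ∧ (n + 1) * k ∈ M := by
    intro n
    induction n with
    | zero => exact ⟨L, hL, hkL, by simpa using hkL⟩
    | succ n ih =>
      obtain ⟨M, hM, hkM, hnkM⟩ := ih
      obtain ⟨M', hM', hsub⟩ := hF M hM L hL
      refine ⟨M', hM', hsub ?_, hsub ?_⟩
      · have : k + 0 ∈ M + L := add_mem_add hkM h0
        simpa using this
      · have : (n + 1) * k + k ∈ M + L := add_mem_add hnkM hkL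
        simpa [add_mul, one_mul] using this
  have hge : ∀ n : ℕ, (n : ℝ≥0∞) ≤ famElast F := by
    intro n
    obtain ⟨M, hM, hkM, hnkM⟩ := claim n
    have h1 : ((n + 1) * k : ℕ) ≤ supE M := supE_ge hnkM
    have h2 : infE (M \ {0}) ≤ (k : ℝ≥0∞) := infE_le ⟨hkM, by simpa using hk.ne'⟩
    have h3 : (((n + 1) * k : ℕ) : ℝ≥0∞) / (k : ℝ≥0∞) ≤ elast M :=
      ENNReal.div_le_div h1 h2
    have hk0 : (k : ℝ≥0∞) ≠ 0 := by exact_mod_cast hk.ne'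
    have h4 : (((n + 1) * k : ℕ) : ℝ≥0∞) / (k : ℝ≥0∞) = ((n : ℝ≥0∞) + 1) := by
      push_cast
      rw [mul_div_assoc, ENNReal.div_self hk0 (by simp), mul_one]
    calc (n : ℝ≥0∞) ≤ (n : ℝ≥0∞) + 1 := le_self_add
      _ ≤ elast M := by rw [← h4]; exact h3
      _ ≤ famElast F := elast_le_fam hM
  have : (⊤ : ℝ≥0∞) ≤ famElast F := by
    rw [← ENNReal.iSup_natCast]
    exact iSup_le hge
  exact top_le_iff.mp this

theorem stmt_11 (F : Set (Set ℕ)) (hF : Subadd F) (hfin : famElast F < ⊤)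
    (k : ℕ) (hk : 0 < k) :
    USupE F k ≤ (k : ℝ≥0∞) * famElast F ∧
      (k : ℝ≥0∞) * (famElast F)⁻¹ ≤ UInfE F k := by
  set ρ := famElast F with hρ
  have hρtop : ρ ≠ ⊤ := hfin.ne
  constructor
  · -- sup bound
    apply sSup_le
    rintro _ ⟨x, hx, rfl⟩
    simp only [UU, mem_iUnion, mem_setOf_eq] at hx
    obtain ⟨L, ⟨hLF, hkL⟩, hxL⟩ := hx
    have hkL' : k ∈ L \ {0} := ⟨hkL, by simpa using hk.ne'⟩
    have hinf_le : infE (L \ {0}) ≤ (k : ℝ≥0∞) := infE_le hkL'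
    have hinf_ne0 : infE (L \ {0}) ≠ 0 := by
      have : (1 : ℝ≥0∞) ≤ infE (L \ {0}) := by
        apply le_sInf
        rintro _ ⟨y, ⟨hyL, hy0⟩, rfl⟩
        show (1:ℝ≥0∞) ≤ (y:ℝ≥0∞)
        exact_mod_cast Nat.one_le_iff_ne_zero.mpr (by simpa using hy0)
      exact fun h => by simp [h] at this
    have hinf_netop : infE (L \ {0}) ≠ ⊤ :=
      (lt_of_le_of_lt hinf_le (by simp)).ne
    have helast : elast L ≤ ρ := elast_le_fam hLF
    have hsup : supE L ≤ ρ * infE (L \ {0}) :=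
      (ENNReal.div_le_iff hinf_ne0 hinf_netop).mp helast
    calc (x : ℝ≥0∞) ≤ supE L := supE_ge hxL
      _ ≤ ρ * infE (L \ {0}) := hsup
      _ ≤ ρ * k := by gcongr
      _ = k * ρ := mul_comm _ _
  · -- inf bound
    apply le_sInf
    rintro _ ⟨x, hx, rfl⟩
    simp only [UU, mem_iUnion, mem_setOf_eq] at hx
    obtain ⟨L, ⟨hLF, hkL⟩, hxL⟩ := hx
    rcases Nat.eq_zero_or_pos x with hx0 | hxpos
    · subst hx0
      exact absurd (chain_top hF hLF hxL hkL hk) hρtop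
    · have hxL' : x ∈ L \ {0} := ⟨hxL, by simpa using hxpos.ne'⟩
      have hdiv : (k : ℝ≥0∞) / (x : ℝ≥0∞) ≤ elast L :=
        ENNReal.div_le_div (supE_ge hkL) (infE_le hxL')
      have hdivρ : (k : ℝ≥0∞) / (x : ℝ≥0∞) ≤ ρ := hdiv.trans (elast_le_fam hLF)
      have hx0' : (x : ℝ≥0∞) ≠ 0 := by exact_mod_cast hxpos.ne'
      have hxtop : (x : ℝ≥0∞) ≠ ⊤ := by simp
      have hkle : (k : ℝ≥0∞) ≤ ρ * x := (ENNReal.div_le_iff hx0' hxtop).mp hdivρ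
      have hρ0 : ρ ≠ 0 := by
        intro h
        rw [h, zero_mul] at hkle
        simp only [nonpos_iff_eq_zero, Nat.cast_eq_zero] at hkle
        exact hk.ne' hkle
      rw [← div_eq_mul_inv]
      exact (ENNReal.div_le_iff hρ0 hρtop).mpr (by rwa [mul_comm] at hkle)
end

section
/- Let 𝓛 ⊆ 𝒫(ℕ) be a subadditive family with 0 < ρ(𝓛) < ∞, and suppose there are n ∈ ℕ⁺ and L ∈ 𝓛 with nρ(𝓛) ≤ sup L and inf L ≤ n. Then sup L = nρ(𝓛), inf L = n, and ρ(L) = ρ(𝓛), i.e., 𝓛 has accepted elasticity. -/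
open Pointwise Set ENNReal

lemma no_zero_aux (F : Set (Set ℕ)) (hF : Subadd F) (hfin : famElast F < ⊤)
    (L : Set ℕ) (hL : L ∈ F) (a : ℕ) (ha : a ∈ L) (hapos : 0 < a)
    (h0 : (0:ℕ) ∈ L) : False := by
  have key : ∀ k : ℕ, ∃ L' ∈ F, (0:ℕ) ∈ L' ∧ a ∈ L' ∧ 2^k * a ∈ L' := by
    intro k
    induction k with
    | zero => exact ⟨L, hL, h0, ha, by simpa using ha⟩
    | succ k ih =>
      obtain ⟨L', hL', h0', ha', hk⟩ := ih
      obtain ⟨L'', hL'', hsub⟩ := hF L' hL' L' hL'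
      refine ⟨L'', hL'', ?_, ?_, ?_⟩
      · simpa using hsub (Set.add_mem_add h0' h0')
      · simpa using hsub (Set.add_mem_add h0' ha')
      · have he : 2^(k+1) * a = 2^k * a + 2^k * a := by ring
        rw [he]
        exact hsub (Set.add_mem_add hk hk)
  have hbound : ∀ k : ℕ, (2^k : ℝ≥0∞) ≤ famElast F := by
    intro k
    obtain ⟨L', hL', h0', ha', hk⟩ := key k
    have hs : ((2^k * a : ℕ) : ℝ≥0∞) ≤ supE L' := le_sSup ⟨_, hk, rfl⟩
    have hi : infE (L' \ {0}) ≤ (a : ℝ≥0∞) :=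
      sInf_le ⟨a, ⟨ha', by simpa using hapos.ne'⟩, rfl⟩
    have h3 : ((2^k * a : ℕ) : ℝ≥0∞) / (a : ℝ≥0∞) ≤ elast L' :=
      ENNReal.div_le_div hs hi
    have h4 : ((2^k * a : ℕ) : ℝ≥0∞) / (a : ℝ≥0∞) = (2^k : ℝ≥0∞) := by
      push_cast
      rw [mul_div_assoc, ENNReal.div_self (by exact_mod_cast hapos.ne') (by simp)]
      simp
    calc (2^k : ℝ≥0∞) = _ := h4.symm
      _ ≤ elast L' := h3
      _ ≤ famElast F := le_iSup₂ (f := fun L _ => elast L) L' hL'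
  obtain ⟨N, hN⟩ := ENNReal.exists_nat_gt hfin.ne
  have hle : (N : ℝ≥0∞) ≤ (2^N : ℝ≥0∞) := by
    exact_mod_cast Nat.le_of_lt (Nat.lt_two_pow_self (n := N))
  exact (hN.trans_le (hle.trans (hbound N))).false

theorem stmt_12 (F : Set (Set ℕ)) (hF : Subadd F)
    (h0 : 0 < famElast F) (hfin : famElast F < ⊤)
    (n : ℕ) (hn : 0 < n) (L : Set ℕ) (hL : L ∈ F)
    (h1 : (n : ℝ≥0∞) * famElast F ≤ supE L) (h2 : infE L ≤ (n : ℝ≥0∞)) :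
    supE L = (n : ℝ≥0∞) * famElast F ∧ infE L = (n : ℝ≥0∞) ∧ elast L = famElast F := by
  set ρ := famElast F with hρdef
  have hsup_pos : 0 < supE L :=
    lt_of_lt_of_le (ENNReal.mul_pos (by exact_mod_cast hn.ne') h0.ne') h1
  have hex : ∃ a ∈ L, 0 < a := by
    by_contra hc
    push_neg at hc
    have hz : supE L ≤ 0 := by
      apply sSup_le
      rintro x ⟨y, hy, rfl⟩
      simp [Nat.le_zero.mp (hc y hy)]
    exact absurd hz (not_le.mpr hsup_pos)
  obtain ⟨a, ha, hapos⟩ := hex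
  have h0L : (0:ℕ) ∉ L := fun h0' => no_zero_aux F hF hfin L hL a ha hapos h0'
  have hdiff : L \ {0} = L := Set.diff_singleton_eq_self h0L
  set m := sInf L with hmdef
  have hmL : m ∈ L := Nat.sInf_mem ⟨a, ha⟩
  have hmpos : 0 < m := Nat.pos_of_ne_zero (fun h => h0L (h ▸ hmL))
  have hinf : infE L = (m : ℝ≥0∞) := by
    refine le_antisymm (sInf_le (Set.mem_image_of_mem _ hmL)) (le_sInf ?_)
    rintro x ⟨y, hy, rfl⟩
    exact Nat.cast_le.mpr (Nat.sInf_le hy)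
  have hmn : m ≤ n := by
    rw [hinf] at h2
    exact_mod_cast h2
  have helast : elast L = supE L / (m : ℝ≥0∞) := by
    rw [elast, hdiff, hinf]
  have helast_le : elast L ≤ ρ := le_iSup₂ (f := fun L _ => elast L) L hL
  have hm0 : (m : ℝ≥0∞) ≠ 0 := by exact_mod_cast hmpos.ne'
  have hmt : (m : ℝ≥0∞) ≠ ⊤ := ENNReal.natCast_ne_top m
  have hsup_le : supE L ≤ ρ * (m : ℝ≥0∞) := by
    rw [helast] at helast_le
    exact (ENNReal.div_le_iff hm0 hmt).mp helast_le
  have hsup_eq : supE L = (n : ℝ≥0∞) * ρ := by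
    apply le_antisymm _ h1
    calc supE L ≤ ρ * (m : ℝ≥0∞) := hsup_le
      _ ≤ ρ * (n : ℝ≥0∞) := mul_le_mul_right (Nat.cast_le.mpr hmn) ρ
      _ = (n : ℝ≥0∞) * ρ := mul_comm _ _
  have hnm : n ≤ m := by
    have h5 : (n : ℝ≥0∞) * ρ ≤ (m : ℝ≥0∞) * ρ := by
      rw [mul_comm (m : ℝ≥0∞) ρ]
      exact le_trans h1 hsup_le
    have h6 : (n : ℝ≥0∞) ≤ (m : ℝ≥0∞) :=
      (ENNReal.mul_le_mul_iff_left h0.ne' hfin.ne).mp h5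
    exact_mod_cast h6
  have hmn' : m = n := le_antisymm hmn hnm
  have hinf_eq : infE L = (n : ℝ≥0∞) := by rw [hinf, hmn']
  refine ⟨hsup_eq, hinf_eq, ?_⟩
  rw [helast, hmn', hsup_eq, mul_div_assoc]
  exact ENNReal.mul_div_cancel (by exact_mod_cast hn.ne') (ENNReal.natCast_ne_top n)
end

section
/- Let 𝓛 ⊆ 𝒫(ℕ) be a subadditive family with 0 < ρ(𝓛) < ∞. If ρ_n = nρ(𝓛) for some n ∈ ℕ⁺ (where ρ_n := sup ⋃{L ∈ 𝓛 : n ∈ L}), then 𝓛 has accepted elasticity, i.e., ρ(𝓛) = ρ(L) for some L ∈ 𝓛. -/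
open Pointwise Set ENNReal

theorem stmt_15 (F : Set (Set ℕ)) (hF : Subadd F)
    (h0 : 0 < famElast F) (hfin : famElast F < ⊤)
    (n : ℕ) (hn : 0 < n) (hsup : USupE F n = (n : ℝ≥0∞) * famElast F) :
    ∃ L ∈ F, elast L = famElast F := by
  set ρ := famElast F with hρ
  have hnρ0 : (n : ℝ≥0∞) * ρ ≠ 0 := by
    simp [hn.ne', h0.ne']
  have hnρtop : (n : ℝ≥0∞) * ρ ≠ ⊤ := by
    exact ENNReal.mul_ne_top (by simp) hfin.ne
  -- 𝒰_n is nonempty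
  have hne : (UU F n).Nonempty := by
    by_contra h
    rw [Set.not_nonempty_iff_eq_empty] at h
    apply hnρ0
    rw [← hsup]
    simp [USupE, supE, h]
  -- 𝒰_n is bounded above
  obtain ⟨B, hB⟩ := ENNReal.exists_nat_gt hnρtop
  have hbdd : BddAbove (UU F n) := by
    refine ⟨B, fun m hm => ?_⟩
    have h1 : (m : ℝ≥0∞) ≤ (n : ℝ≥0∞) * ρ := by
      rw [← hsup]
      exact le_sSup ⟨m, hm, rfl⟩
    exact_mod_cast h1.trans_lt hB |>.le
  -- the max m of 𝒰_n satisfies coe m = n·ρ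
  set m := sSup (UU F n) with hm
  have hmem : m ∈ UU F n := Nat.sSup_mem hne hbdd
  have hmval : (m : ℝ≥0∞) = (n : ℝ≥0∞) * ρ := by
    apply le_antisymm
    · rw [← hsup]; exact le_sSup ⟨m, hmem, rfl⟩
    · rw [← hsup, USupE, supE]
      apply sSup_le
      rintro x ⟨k, hk, rfl⟩
      show ((k:ℕ):ℝ≥0∞) ≤ (m:ℝ≥0∞)
      exact_mod_cast le_csSup hbdd hk
  -- extract L
  obtain ⟨L, hL, hmL⟩ : ∃ L, L ∈ {L ∈ F | n ∈ L} ∧ m ∈ L := by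
    simpa [UU] using hmem
  obtain ⟨hLF, hnL⟩ := hL
  refine ⟨L, hLF, le_antisymm ?_ ?_⟩
  · exact le_biSup elast hLF
  · -- ρ = n·ρ/n ≤ supE L / infE (L \ {0}) = elast L
    have h1 : ((n : ℝ≥0∞) * ρ) ≤ supE L := le_sSup ⟨m, hmL, hmval⟩
    have h2 : infE (L \ {0}) ≤ (n : ℝ≥0∞) :=
      sInf_le ⟨n, ⟨hnL, by simp [hn.ne']⟩, rfl⟩
    have h3 : (n : ℝ≥0∞) * ρ / n ≤ elast L := ENNReal.div_le_div h1 h2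
    calc ρ = ρ * ((n:ℝ≥0∞)/n) := by
              rw [ENNReal.div_self (by simp [hn.ne']) (by simp), mul_one]
      _ = (n : ℝ≥0∞) * ρ / n := by rw [← mul_div_assoc, mul_comm]
      _ ≤ elast L := h3
end

section
/- Let 𝓛 ⊆ 𝒫(ℕ) be a subadditive family, 𝒰_k := ⋃ {L ∈ 𝓛 : k ∈ L}, and Δ_∪(𝓛) := ⋃_{k≥0} Δ(𝒰_k). Then sup Δ_∪(𝓛) ≤ sup Δ(𝓛). -/
open Pointwise Set ENNReal

theorem stmt_16 (F : Set (Set ℕ)) (hF : Subadd F) :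
    supN (⋃ k : ℕ, DeltaSet (UU F k)) ≤ supN (DeltaFam F) := by
  classical
  apply sSup_le
  rintro x ⟨d, hd, rfl⟩
  rw [Set.mem_iUnion] at hd
  obtain ⟨k, hd⟩ := hd
  simp only [DeltaSet, Set.mem_setOf_eq] at hd
  obtain ⟨hd1, l, hlU, hEq⟩ := hd
  have hldU : l + d ∈ UU F k := by
    have h : l + d ∈ UU F k ∩ Set.Icc l (l + d) := by
      rw [hEq]; right; rfl
    exact h.1
  obtain ⟨L₁, hL₁, hlL₁⟩ : ∃ L, (L ∈ F ∧ k ∈ L) ∧ l ∈ L := by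
    simpa [UU, Set.mem_iUnion] using hlU
  obtain ⟨L₂, hL₂, hldL₂⟩ : ∃ L, (L ∈ F ∧ k ∈ L) ∧ l + d ∈ L := by
    simpa [UU, Set.mem_iUnion] using hldU
  have hsub : ∀ L, L ∈ F → k ∈ L → L ⊆ UU F k := fun L h1 h2 x hx =>
    Set.mem_biUnion (show L ∈ {L ∈ F | k ∈ L} from ⟨h1, h2⟩) hx
  have key : ∀ d' L, L ∈ F → d' ∈ DeltaSet L → d ≤ d' →
      (d : ℕ∞) ≤ supN (DeltaFam F) := by
    intro d' L hLF hd' hdd'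
    have hmem : (d' : ℕ∞) ∈ (fun n : ℕ => (n : ℕ∞)) '' DeltaFam F :=
      ⟨d', Set.mem_biUnion hLF hd', rfl⟩
    exact le_trans (by exact_mod_cast hdd') (le_sSup hmem)
  by_cases hA : ∃ m, m ∈ L₁ ∧ l < m
  · set m₀ := Nat.find hA with hm₀
    obtain ⟨hm₀L, hlm₀⟩ := Nat.find_spec hA
    have hge : l + d ≤ m₀ := by
      by_contra h
      push_neg at h
      have hmem : m₀ ∈ UU F k ∩ Set.Icc l (l + d) :=
        ⟨hsub L₁ hL₁.1 hL₁.2 hm₀L, le_of_lt hlm₀, le_of_lt h⟩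
      rw [hEq] at hmem
      simp only [Set.mem_insert_iff, Set.mem_singleton_iff] at hmem
      omega
    refine key (m₀ - l) L₁ hL₁.1 ⟨by omega, l, hlL₁, ?_⟩ (by omega)
    ext y
    simp only [Set.mem_inter_iff, Set.mem_Icc, Set.mem_insert_iff,
      Set.mem_singleton_iff]
    constructor
    · rintro ⟨hyL, hy1, hy2⟩
      rcases eq_or_lt_of_le hy1 with h | h
      · exact Or.inl h.symm
      · have hge' : m₀ ≤ y := Nat.find_min' hA ⟨hyL, h⟩
        right; omega
    · rintro (rfl | rfl)
      · exact ⟨hlL₁, le_refl _, by omega⟩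
      · have heq : l + (m₀ - l) = m₀ := by omega
        rw [heq]
        exact ⟨hm₀L, by omega, by omega⟩
  · push_neg at hA
    have hkl : k ≤ l := hA k hL₁.2
    set m₁ := Nat.findGreatest (· ∈ L₂) l with hm₁
    have hm₁L : m₁ ∈ L₂ := Nat.findGreatest_spec hkl hL₂.2
    have hm₁l : m₁ ≤ l := Nat.findGreatest_le l
    refine key (l + d - m₁) L₂ hL₂.1 ⟨by omega, m₁, hm₁L, ?_⟩ (by omega)
    have hmadd : m₁ + (l + d - m₁) = l + d := by omega
    rw [hmadd]
    ext y
    simp only [Set.mem_inter_iff, Set.mem_Icc, Set.mem_insert_iff,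
      Set.mem_singleton_iff]
    constructor
    · rintro ⟨hyL, hy1, hy2⟩
      by_cases hyl : y ≤ l
      · left
        by_contra hne
        have hlt : m₁ < y := lt_of_le_of_ne hy1 (Ne.symm hne)
        exact Nat.findGreatest_is_greatest hlt hyl hyL
      · push_neg at hyl
        have hmem : y ∈ UU F k ∩ Set.Icc l (l + d) :=
          ⟨hsub L₂ hL₂.1 hL₂.2 hyL, by omega, hy2⟩
        rw [hEq] at hmem
        simp only [Set.mem_insert_iff, Set.mem_singleton_iff] at hmem
        right; omega
    · rintro (rfl | rfl)
      · exact ⟨hm₁L, le_refl _, by omega⟩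
      · exact ⟨hldL₂, by omega, le_refl _⟩
end

section
/- For all L, L' ⊆ ℕ, sup Δ(L + L') ≤ max(sup Δ(L), sup Δ(L')), where L + L' is the sumset and Δ(X) := {d ≥ 1 : ∃x ∈ X, X ∩ [x, x+d] = {x, x+d}} with sup ∅ := 0. -/
open Pointwise Set ENNReal

lemma half_gap {A : Set ℕ} {a a' d : ℕ} (ha : a ∈ A) (ha' : a' ∈ A) (haa : a < a')
    (hmid : ∀ y ∈ A, a < y → y < a + d → False) (hd : 1 ≤ d) :
    ∃ d' ∈ DeltaSet A, d ≤ d' := by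
  set S : Set ℕ := {y | y ∈ A ∧ a < y} with hS
  have hne : S.Nonempty := ⟨a', ha', haa⟩
  set a₀ := sInf S with ha₀
  have hmem : a₀ ∈ S := Nat.sInf_mem hne
  have ha₀A : a₀ ∈ A := hmem.1
  have ha₀gt : a < a₀ := hmem.2
  have hge : a + d ≤ a₀ := by
    by_contra h
    exact hmid a₀ ha₀A ha₀gt (by omega)
  refine ⟨a₀ - a, ⟨by omega, a, ha, ?_⟩, by omega⟩
  have hEq : a + (a₀ - a) = a₀ := by omega
  rw [hEq]
  ext y
  simp only [Set.mem_inter_iff, Set.mem_Icc, Set.mem_insert_iff, Set.mem_singleton_iff]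
  constructor
  · rintro ⟨hyA, hy1, hy2⟩
    rcases eq_or_lt_of_le hy1 with h | h
    · exact Or.inl h.symm
    · have : a₀ ≤ y := Nat.sInf_le ⟨hyA, h⟩
      exact Or.inr (by omega)
  · rintro (rfl | rfl)
    · exact ⟨ha, le_refl _, by omega⟩
    · exact ⟨ha₀A, by omega, le_refl _⟩

lemma key_gap (L L' : Set ℕ) {d : ℕ} (hd : d ∈ DeltaSet (L + L')) :
    (∃ d' ∈ DeltaSet L, d ≤ d') ∨ (∃ d' ∈ DeltaSet L', d ≤ d') := by
  obtain ⟨hd1, x, hx, hX⟩ := hd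
  have hxd : x + d ∈ L + L' := by
    have : x + d ∈ (L + L') ∩ Set.Icc x (x + d) := by
      rw [hX]; exact Or.inr rfl
    exact this.1
  have hmid : ∀ y ∈ L + L', x < y → y < x + d → False := by
    intro y hy h1 h2
    have : y ∈ (L + L') ∩ Set.Icc x (x + d) := ⟨hy, le_of_lt h1, le_of_lt h2⟩
    rw [hX] at this
    simp only [Set.mem_insert_iff, Set.mem_singleton_iff] at this
    omega
  obtain ⟨a, ha, b, hb, hab⟩ := hx
  obtain ⟨a', ha', b', hb', hab'⟩ := hxd
  have hab : a + b = x := hab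
  have hab' : a' + b' = x + d := hab'
  rcases lt_or_ge a a' with hlt | hle
  · left
    refine half_gap ha ha' hlt (fun a'' ha'' h1 h2 => ?_) hd1
    exact hmid (a'' + b) ⟨a'', ha'', b, hb, rfl⟩ (by omega) (by omega)
  · right
    have hbb : b < b' := by omega
    refine half_gap hb hb' hbb (fun b'' hb'' h1 h2 => ?_) hd1
    exact hmid (a + b'') ⟨a, ha, b'', hb'', rfl⟩ (by omega) (by omega)

theorem stmt_19 (L L' : Set ℕ) :
    supN (DeltaSet (L + L')) ≤ max (supN (DeltaSet L)) (supN (DeltaSet L')) := by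
  apply sSup_le
  rintro z ⟨d, hd, rfl⟩
  rcases key_gap L L' hd with ⟨d', hd', hle⟩ | ⟨d', hd', hle⟩
  · exact le_trans (show ((d:ℕ∞)) ≤ (d':ℕ∞) from Nat.cast_le.mpr hle)
      (le_max_of_le_left (le_sSup ⟨d', hd', rfl⟩))
  · exact le_trans (show ((d:ℕ∞)) ≤ (d':ℕ∞) from Nat.cast_le.mpr hle)
      (le_max_of_le_right (le_sSup ⟨d', hd', rfl⟩))
end
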